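/- Let n be a positive integer, let A be a tournament matrix of order n, let μ₁,…,μₙ ∈ ℂ be the eigenvalues of A with multiplicity, and let ρ = (maxᵢ |μᵢ|)/n be the spectral radius of A divided by n. Then 0 < ρ ≤ 1/2 and σ₃(A) ≤ ⌊ρ⁻¹/2⌋·ρ³ + (1/2 − ⌊ρ⁻¹/2⌋·ρ)³. -/

import Mathlib

/-!
Let `v` be an eigenvector of the tournament matrix `A` for the eigenvalue `μ`. Since `A + Aᵀ = J`,
the real part of `v* A v = μ ‖v‖²` is `(|Σ Re vᵢ|² + |Σ Im vᵢ|²) / 2 ≥ 0`, and since `A ≥ 0`,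
`|μ| ‖v‖² ≤ Σ Aᵢⱼ |vᵢ| |vⱼ| = (Σ |vᵢ|)² / 2 ≤ n ‖v‖² / 2`. Hence `Re μ ≥ 0` and `|μ| ≤ n / 2`.

As `tr A = n / 2`, the numbers `yᵢ = Re μᵢ / n` lie in `[0, ρ]` and sum to `1 / 2`, while
`σ₃(A) = Σ Re (μᵢ³) / n³ ≤ Σ yᵢ³` because `Re (z³) = (Re z)³ - 3 Re z (Im z)²`. Finally, a sum of
cubes of numbers in `[0, ρ]` with prescribed sum `s` is largest when `⌊s / ρ⌋` of them equal `ρ`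
and one more carries the remainder.
-/

open Polynomial Module Matrix Finset

theorem LinearMap.trace_pow_eq_of_isNilpotent_sub {R M : Type*} [CommRing R] [IsReduced R]
    [AddCommGroup M] [Module R M] [Module.Free R M] [Module.Finite R M]
    {g : Module.End R M} {μ : R} (hg : IsNilpotent (g - algebraMap R _ μ)) (k : ℕ) :
    LinearMap.trace R M (g ^ k) = μ ^ k * finrank R M := by
  induction k with
  | zero => simp
  | succ k ih =>
    rw [pow_succ, Module.End.mul_eq_comp,
      LinearMap.trace_comp_eq_mul_of_commute_of_isNilpotent μ (Commute.pow_left rfl k) hg, ih,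
      pow_succ]
    ring

/- `V` is the direct sum of the generalized eigenspaces of `f`; on the one for `μ`, whose dimension
is the multiplicity of `μ` as a root of the characteristic polynomial, `f` is `μ` plus a
nilpotent. -/
theorem Module.End.trace_pow_eq_sum_roots_charpoly_pow {K V : Type*} [Field K] [IsAlgClosed K]
    [AddCommGroup V] [Module K V] [FiniteDimensional K V] (f : Module.End K V) (k : ℕ) :
    LinearMap.trace K V (f ^ k) = (f.charpoly.roots.map (· ^ k)).sum := by
  classical
  have hds := DirectSum.isInternal_submodule_of_iSupIndep_of_iSup_eq_top
    f.independent_maxGenEigenspace f.iSup_maxGenEigenspace_eq_top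
  have hfin : {μ | f.maxGenEigenspace μ ≠ ⊥}.Finite :=
    WellFoundedGT.finite_ne_bot_of_iSupIndep f.independent_maxGenEigenspace
  have hmaps μ := f.mapsTo_maxGenEigenspace_of_comm (Commute.refl f) μ
  have hmaps_pow μ := f.mapsTo_maxGenEigenspace_of_comm ((Commute.refl f).pow_right k) μ
  have htrace μ : LinearMap.trace K _ ((f ^ k).restrict (hmaps_pow μ)) =
      μ ^ k * f.charpoly.rootMultiplicity μ := by
    rw [← Module.End.pow_restrict k (hmaps μ), LinearMap.trace_pow_eq_of_isNilpotent_sub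
      (f.isNilpotent_restrict_maxGenEigenspace_sub_algebraMap μ),
      LinearMap.finrank_maxGenEigenspace_eq]
  rw [LinearMap.trace_eq_sum_trace_restrict' hds hfin hmaps_pow, sum_congr rfl fun μ _ => htrace μ,
    sum_multiset_map_count]
  simp_rw [count_roots, nsmul_eq_mul, mul_comm (_ : K)]
  symm
  refine sum_subset (fun μ hμ => ?_) fun μ _ hμ => ?_
  · rw [Set.Finite.mem_toFinset, Set.mem_ofPred_eq, Ne, ← Submodule.finrank_eq_zero,
      LinearMap.finrank_maxGenEigenspace_eq, rootMultiplicity_eq_zero_iff]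
    simp_all [f.charpoly_monic.ne_zero]
  · rw [Multiset.mem_toFinset, mem_roots f.charpoly_monic.ne_zero] at hμ
    simp [rootMultiplicity_eq_zero hμ]

theorem sum_norm_sq_pos {n E : Type*} [Fintype n] [NormedAddCommGroup E] {v : n → E}
    (hv : v ≠ 0) : 0 < ∑ i, ‖v i‖ ^ 2 := by
  obtain ⟨i, hi⟩ := Function.ne_iff.1 hv
  exact sum_pos' (fun i _ => by positivity) ⟨i, mem_univ i, by positivity⟩

namespace Matrix

theorem trace_pow_eq_sum_roots_charpoly_pow {K n : Type*} [Field K] [IsAlgClosed K]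
    [Fintype n] [DecidableEq n] (M : Matrix n n K) (k : ℕ) :
    (M ^ k).trace = (M.charpoly.roots.map (· ^ k)).sum := by
  rw [← trace_toLin'_eq, ← charpoly_toLin', toLin'_pow]
  exact Module.End.trace_pow_eq_sum_roots_charpoly_pow _ k

theorem exists_mulVec_eq_smul_of_isRoot_charpoly {K n : Type*} [Field K] [Fintype n]
    [DecidableEq n] {M : Matrix n n K} {μ : K} (h : M.charpoly.IsRoot μ) :
    ∃ v ≠ 0, M *ᵥ v = μ • v := by
  rw [← charpoly_toLin', ← Module.End.hasEigenvalue_iff_isRoot_charpoly] at h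
  obtain ⟨v, hv⟩ := h.exists_hasEigenvector
  exact ⟨v, hv.2, by simpa using hv.apply_eq_smul⟩

theorem star_dotProduct_mulVec_of_mulVec_eq_smul {n : Type*} [Fintype n] {M : Matrix n n ℂ}
    {v : n → ℂ} {μ : ℂ} (h : M *ᵥ v = μ • v) :
    star v ⬝ᵥ M *ᵥ v = μ * (∑ i, ‖v i‖ ^ 2 : ℝ) := by
  rw [h, dotProduct_smul, smul_eq_mul]
  simp [dotProduct, Complex.conj_mul']

section RealMatrix

variable {n : Type*} [Fintype n] {A : Matrix n n ℝ}

theorem ofReal_trace_pow_eq_sum_pow [DecidableEq n] {m : Type*} [Fintype m] {μ : m → ℂ}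
    (hμ : (A.map Complex.ofReal).charpoly.roots = Multiset.map μ univ.val) (k : ℕ) :
    ((A ^ k).trace : ℂ) = ∑ i, μ i ^ k := by
  have hmap : A.map Complex.ofReal ^ k = (A ^ k).map Complex.ofReal :=
    (map_pow Complex.ofRealHom.mapMatrix A k).symm
  have htrace : ((A ^ k).map Complex.ofReal).trace = ((A ^ k).trace : ℂ) := by
    simp [Matrix.trace]
  rw [← htrace, ← hmap, trace_pow_eq_sum_roots_charpoly_pow, hμ, Multiset.map_map]
  rfl

theorem re_star_dotProduct_map_mulVec (A : Matrix n n ℝ) (v : n → ℂ) :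
    (star v ⬝ᵥ A.map Complex.ofReal *ᵥ v).re
      = (fun i => (v i).re) ⬝ᵥ A *ᵥ (fun i => (v i).re)
        + (fun i => (v i).im) ⬝ᵥ A *ᵥ (fun i => (v i).im) := by
  simp only [dotProduct, mulVec, Finset.mul_sum, Complex.re_sum, ← sum_add_distrib]
  refine sum_congr rfl fun i _ => sum_congr rfl fun j _ => ?_
  simp [Complex.mul_re, Complex.mul_im]

theorem norm_star_dotProduct_map_mulVec_le (hA0 : ∀ i j, 0 ≤ A i j) (v : n → ℂ) :
    ‖star v ⬝ᵥ A.map Complex.ofReal *ᵥ v‖ ≤ (fun i => ‖v i‖) ⬝ᵥ A *ᵥ (fun i => ‖v i‖) := by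
  simp only [dotProduct, mulVec, Finset.mul_sum]
  refine (norm_sum_le _ _).trans (sum_le_sum fun i _ => (norm_sum_le _ _).trans_eq ?_)
  refine sum_congr rfl fun j _ => ?_
  simp [abs_of_nonneg (hA0 i j)]

theorem trace_eq_card_div_two (hAT : A + Aᵀ = of fun _ _ => 1) :
    A.trace = Fintype.card n / 2 := by
  have hdiag i : A i i = 1 / 2 := by
    have := congrFun (congrFun hAT i) i
    simp only [add_apply, transpose_apply, of_apply] at this
    linarith
  simp [Matrix.trace, hdiag, div_eq_mul_inv]

theorem two_mul_dotProduct_mulVec_self (hAT : A + Aᵀ = of fun _ _ => 1) (x : n → ℝ) :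
    2 * (x ⬝ᵥ A *ᵥ x) = (∑ i, x i) ^ 2 := by
  have hsym : x ⬝ᵥ Aᵀ *ᵥ x = x ⬝ᵥ A *ᵥ x := by
    rw [mulVec_transpose, dotProduct_comm, dotProduct_mulVec]
  have := congrArg (fun M => x ⬝ᵥ M *ᵥ x) hAT
  simp only [add_mulVec, dotProduct_add, hsym] at this
  rw [two_mul, this, sq, sum_mul_sum]
  simp [dotProduct, mulVec, Finset.mul_sum, mul_comm]

theorem re_nonneg_of_mulVec_eq_smul (hAT : A + Aᵀ = of fun _ _ => 1) {v : n → ℂ} (hv : v ≠ 0)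
    {μ : ℂ} (h : A.map Complex.ofReal *ᵥ v = μ • v) : 0 ≤ μ.re := by
  have hquad := congrArg Complex.re (star_dotProduct_mulVec_of_mulVec_eq_smul h)
  rw [re_star_dotProduct_map_mulVec, Complex.re_mul_ofReal] at hquad
  have hre := two_mul_dotProduct_mulVec_self hAT fun i => (v i).re
  have him := two_mul_dotProduct_mulVec_self hAT fun i => (v i).im
  have := sum_norm_sq_pos hv
  nlinarith [sq_nonneg (∑ i, (v i).re), sq_nonneg (∑ i, (v i).im)]

theorem norm_le_of_mulVec_eq_smul (hA0 : ∀ i j, 0 ≤ A i j) (hAT : A + Aᵀ = of fun _ _ => 1)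
    {v : n → ℂ} (hv : v ≠ 0) {μ : ℂ} (h : A.map Complex.ofReal *ᵥ v = μ • v) :
    ‖μ‖ ≤ Fintype.card n / 2 := by
  have hquad := norm_star_dotProduct_map_mulVec_le hA0 v
  rw [star_dotProduct_mulVec_of_mulVec_eq_smul h, norm_mul, Complex.norm_real,
    Real.norm_of_nonneg (by positivity)] at hquad
  have hsum := two_mul_dotProduct_mulVec_self hAT fun i => ‖v i‖
  have hcs := sq_sum_le_card_mul_sum_sq (s := univ) (f := fun i => ‖v i‖)
  rw [card_univ] at hcs
  have := sum_norm_sq_pos hv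
  rw [le_div_iff₀ two_pos, ← mul_le_mul_iff_left₀ this]
  nlinarith

theorem re_nonneg_and_norm_le_of_isRoot [DecidableEq n] (hA0 : ∀ i j, 0 ≤ A i j)
    (hAT : A + Aᵀ = of fun _ _ => 1) {μ : ℂ} (h : (A.map Complex.ofReal).charpoly.IsRoot μ) :
    0 ≤ μ.re ∧ ‖μ‖ ≤ Fintype.card n / 2 := by
  obtain ⟨v, hv, hμ⟩ := exists_mulVec_eq_smul_of_isRoot_charpoly h
  exact ⟨re_nonneg_of_mulVec_eq_smul hAT hv hμ, norm_le_of_mulVec_eq_smul hA0 hAT hv hμ⟩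

end RealMatrix

end Matrix

theorem Complex.re_pow_three_le {z : ℂ} (hz : 0 ≤ z.re) : (z ^ 3).re ≤ z.re ^ 3 := by
  have : (z ^ 3).re = z.re ^ 3 - 3 * z.re * z.im ^ 2 := by
    simp [pow_succ, Complex.mul_re, Complex.mul_im]
    ring
  rw [this]
  nlinarith [sq_nonneg z.im]

/- `x ↦ ⌊x⌋ + fract x ^ 3` is the largest sum of cubes of numbers in `[0, 1]` with sum `x`. -/
theorem floor_add_fract_pow_three_add_pow_three_le (s : ℝ) {z : ℝ} (hz0 : 0 ≤ z) (hz1 : z ≤ 1) :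
    ⌊s⌋ + Int.fract s ^ 3 + z ^ 3 ≤ ⌊s + z⌋ + Int.fract (s + z) ^ 3 := by
  set f := Int.fract s with hf
  have hs : s + z = ⌊s⌋ + (f + z) := by rw [hf, Int.fract]; ring
  rw [hs, Int.floor_intCast_add, Int.fract_intCast_add, Int.cast_add, add_assoc, add_assoc,
    add_le_add_iff_left]
  have hf0 : 0 ≤ f := Int.fract_nonneg s
  have hf1 : f < 1 := Int.fract_lt_one s
  rcases lt_or_ge (f + z) 1 with hlt | hge
  · rw [Int.floor_eq_zero_iff.2 ⟨by positivity, hlt⟩, Int.fract_eq_self.2 ⟨by positivity, hlt⟩,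
      Int.cast_zero, zero_add]
    nlinarith [mul_nonneg (mul_nonneg hf0 hz0) (add_nonneg hf0 hz0)]
  · have hfl : ⌊f + z⌋ = 1 := Int.floor_eq_iff.2 ⟨by simpa using hge, by push_cast; linarith⟩
    rw [hfl, Int.fract, hfl]
    push_cast
    nlinarith [mul_nonneg (mul_nonneg (sub_nonneg.2 hf1.le) (sub_nonneg.2 hz1))
      (sub_nonneg.2 hge)]

theorem sum_pow_three_le_floor_add_fract_pow_three {ι : Type*} (t : Finset ι) (z : ι → ℝ)
    (hz : ∀ i ∈ t, 0 ≤ z i ∧ z i ≤ 1) :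
    ∑ i ∈ t, z i ^ 3 ≤ ⌊∑ i ∈ t, z i⌋ + Int.fract (∑ i ∈ t, z i) ^ 3 := by
  induction t using Finset.cons_induction with
  | empty => simp
  | cons a t ha ih =>
    obtain ⟨ha0, ha1⟩ := hz a (mem_cons_self a t)
    rw [sum_cons, sum_cons, add_comm (z a ^ 3), add_comm (z a)]
    have := floor_add_fract_pow_three_add_pow_three_le (∑ i ∈ t, z i) ha0 ha1
    linarith [ih fun i hi => hz i (mem_cons_of_mem hi)]

theorem sum_pow_three_le {ι : Type*} (t : Finset ι) {ρ : ℝ} (hρ : 0 < ρ) (y : ι → ℝ)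
    (hy : ∀ i ∈ t, 0 ≤ y i ∧ y i ≤ ρ) :
    ∑ i ∈ t, y i ^ 3
      ≤ ⌊(∑ i ∈ t, y i) / ρ⌋ * ρ ^ 3 + (∑ i ∈ t, y i - ⌊(∑ i ∈ t, y i) / ρ⌋ * ρ) ^ 3 := by
  have hz := sum_pow_three_le_floor_add_fract_pow_three t (fun i => y i / ρ) fun i hi =>
    ⟨div_nonneg (hy i hi).1 hρ.le, (div_le_one hρ).2 (hy i hi).2⟩
  simp_rw [← sum_div, Int.fract, div_pow] at hz
  rw [← sum_div, div_le_iff₀ (by positivity)] at hz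
  refine hz.trans_eq ?_
  rw [add_mul, ← mul_pow, sub_mul, div_mul_cancel₀ _ hρ.ne']

/-- Upper bound on σ₃ of a tournament matrix in terms of its normalized spectral
radius ρ. -/
theorem stmt_11 (n : ℕ) (hn : 0 < n) (A : Matrix (Fin n) (Fin n) ℝ)
    (hA0 : ∀ i j, 0 ≤ A i j)
    (hAT : A + A.transpose = Matrix.of fun _ _ => (1 : ℝ))
    (μ : Fin n → ℂ)
    (hμ : (A.map (Complex.ofReal : ℝ → ℂ)).charpoly.roots
        = Multiset.map μ Finset.univ.val)
    (ρ : ℝ)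
    (hρub : ∀ i, ‖μ i‖ ≤ ρ * n)
    (hρmax : ∃ i, ‖μ i‖ = ρ * n) :
    (0 < ρ ∧ ρ ≤ 1/2) ∧
    Matrix.trace (A ^ 3) / (n : ℝ) ^ 3
      ≤ ((⌊ρ⁻¹ / 2⌋ : ℤ) : ℝ) * ρ ^ 3 + (1/2 - ((⌊ρ⁻¹ / 2⌋ : ℤ) : ℝ) * ρ) ^ 3 := by
  have hn' : (0 : ℝ) < n := Nat.cast_pos.2 hn
  have heig i : 0 ≤ (μ i).re ∧ ‖μ i‖ ≤ n / 2 := by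
    simpa using re_nonneg_and_norm_le_of_isRoot hA0 hAT
      (isRoot_of_mem_roots (hμ ▸ Multiset.mem_map_of_mem μ (mem_univ i)))
  have hsum : ∑ i, (μ i).re = n / 2 := by
    simpa [trace_eq_card_div_two hAT] using
      (congrArg Complex.re (ofReal_trace_pow_eq_sum_pow hμ 1)).symm
  have hρpos : 0 < ρ := by
    by_contra! hρ
    have : ∑ i, (μ i).re ≤ 0 := sum_nonpos fun i _ =>
      (Complex.re_le_norm _).trans ((hρub i).trans (mul_nonpos_of_nonpos_of_nonneg hρ hn'.le))
    linarith
  obtain ⟨i₀, hi₀⟩ := hρmax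
  refine ⟨⟨hρpos, by nlinarith [hi₀ ▸ (heig i₀).2]⟩, ?_⟩
  have hcube : (A ^ 3).trace ≤ ∑ i, (μ i).re ^ 3 := by
    have := congrArg Complex.re (ofReal_trace_pow_eq_sum_pow hμ 3)
    rw [Complex.ofReal_re, Complex.re_sum] at this
    exact this ▸ sum_le_sum fun i _ => Complex.re_pow_three_le (heig i).1
  have hbound := sum_pow_three_le univ hρpos (fun i => (μ i).re / n) fun i _ =>
    ⟨div_nonneg (heig i).1 hn'.le, (div_le_iff₀ hn').2 ((Complex.re_le_norm _).trans (hρub i))⟩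
  rw [← sum_div, hsum, show (n : ℝ) / 2 / n / ρ = ρ⁻¹ / 2 by field_simp,
    show (n : ℝ) / 2 / n = 1 / 2 by field_simp] at hbound
  refine le_trans ?_ hbound
  simp_rw [div_pow, ← sum_div]
  gcongr
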